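/- arXiv:0806.3256 — 2 statements merged into one kernel-verified Lean document; each statement's English description precedes it below -/
import Mathlib

section
/- Gale duality exchanges restriction and deletion: let 𝒱 = (V, η, ξ) be a polarized arrangement indexed by I and let S ⊆ I satisfy V + ℝ^{I∖S} = ℝ^I (equivalently ℝ^S ∩ V^⊥ = 0). Then (𝒱^S)^∨ = (𝒱^∨)_S as polarized arrangements indexed by I∖S: the orthogonal complement of V ∩ ℝ^{I∖S} inside ℝ^{I∖S} equals the coordinate projection π(V^⊥), and the corresponding η- and ξ-data of (𝒱^S)^∨ and (𝒱^∨)_S agree under the stated identifications. -/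
open Finset

variable {I : Type*} [Fintype I]

/-- The standard dot product on `I → ℝ`. -/
def dot (x y : I → ℝ) : ℝ := ∑ i, x i * y i

/-- The orthogonal complement of a subspace of `I → ℝ` with respect to the standard
inner product. -/
def perp (V : Submodule ℝ (I → ℝ)) : Submodule ℝ (I → ℝ) where
  carrier := {x | ∀ v ∈ V, dot x v = 0}
  zero_mem' := fun v _ => by simp [dot]
  add_mem' := fun {a b} ha hb v hv => by
    have h : dot (a + b) v = dot a v + dot b v := by
      simp [dot, add_mul, Finset.sum_add_distrib]
    rw [h, ha v hv, hb v hv, add_zero]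
  smul_mem' := fun c {a} ha v hv => by
    have h : dot (c • a) v = c * dot a v := by
      simp [dot, Finset.mul_sum, mul_assoc]
    rw [h, ha v hv, mul_zero]

/-- A sign vector: a function `I → ℝ` all of whose values are `+1` or `-1`. -/
def IsSign (α : I → ℝ) : Prop := ∀ i, α i = 1 ∨ α i = -1

/-- A polarized arrangement `(V, η, ξ)`, where `η ∈ ℝ^I/V` is recorded by an arbitrary
lift `η : I → ℝ` and the covector `ξ ∈ V*` is recorded by an arbitrary vector `ξ : I → ℝ`
with `ξ(v) = ⟨ξ, v⟩` for `v ∈ V`.  Condition (a): every lift of `η` has at least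
`|I| - dim V` nonzero coordinates; condition (b): every representative of `ξ` has at
least `dim V` nonzero coordinates. -/
structure PolArr (I : Type*) [Fintype I] where
  V : Submodule ℝ (I → ℝ)
  η : I → ℝ
  ξ : I → ℝ
  cond_a : ∀ x : I → ℝ, x - η ∈ V →
    Fintype.card I - Module.finrank ℝ V ≤ Set.ncard {i | x i ≠ 0}
  cond_b : ∀ x : I → ℝ, x - ξ ∈ perp V →
    Module.finrank ℝ V ≤ Set.ncard {i | x i ≠ 0}

/-- The chamber `Δ_α ⊆ V_η` determined by a sign vector `α`. -/
def Delta (V : Submodule ℝ (I → ℝ)) (η α : I → ℝ) : Set (I → ℝ) :=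
  {x | x - η ∈ V ∧ ∀ i, 0 ≤ α i * x i}

/-- The cone `Σ_α ⊆ V` determined by a sign vector `α`. -/
def SigCone (V : Submodule ℝ (I → ℝ)) (α : I → ℝ) : Set (I → ℝ) :=
  {x | x ∈ V ∧ ∀ i, 0 ≤ α i * x i}

/-- `α` is feasible if `Δ_α ≠ ∅`. -/
def Feasible (V : Submodule ℝ (I → ℝ)) (η α : I → ℝ) : Prop := (Delta V η α).Nonempty

/-- `α` is bounded if `ξ(Σ_α)` is bounded above. -/
def Bounded (V : Submodule ℝ (I → ℝ)) (ξ α : I → ℝ) : Prop :=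
  BddAbove (dot ξ '' SigCone V α)

/-- The flat `H_S = {x ∈ V_η : x_i = 0 for all i ∈ S}`. -/
def Flat (V : Submodule ℝ (I → ℝ)) (η : I → ℝ) (S : Set I) : Set (I → ℝ) :=
  {x | x - η ∈ V ∧ ∀ i ∈ S, x i = 0}

/-- A basis: a subset `b ⊆ I` with `|b| = dim V` and `H_b ≠ ∅`. -/
def IsBasisSet (V : Submodule ℝ (I → ℝ)) (η : I → ℝ) (b : Finset I) : Prop :=
  b.card = Module.finrank ℝ V ∧ (Flat V η ↑b).Nonempty

/-- `ξ` attains its maximum on `Δ_α` exactly at the point `H_b`. -/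
def OptAt (V : Submodule ℝ (I → ℝ)) (η ξ : I → ℝ) (b : Finset I) (α : I → ℝ) : Prop :=
  ∃ p ∈ Flat V η ↑b, p ∈ Delta V η α ∧ ∀ x ∈ Delta V η α, x ≠ p → dot ξ (x - p) < 0

/-- `α = μ(b)`: the bounded feasible sign vector on whose chamber `ξ` is maximized
exactly at `H_b`. -/
def MuSpec (V : Submodule ℝ (I → ℝ)) (η ξ : I → ℝ) (b : Finset I) (α : I → ℝ) : Prop :=
  Feasible V η α ∧ Bounded V ξ α ∧ OptAt V η ξ b α

/-- The coordinate subspace of vectors vanishing on `S`. -/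
def zeroOn (S : Set I) : Submodule ℝ (I → ℝ) where
  carrier := {x | ∀ i ∈ S, x i = 0}
  zero_mem' := fun i _ => rfl
  add_mem' := fun {a b} ha hb i hi => by simp [Pi.add_apply, ha i hi, hb i hi]
  smul_mem' := fun c {a} ha i hi => by simp [Pi.smul_apply, ha i hi]

/-- The inclusion `ℝ^{I∖S} ↪ ℝ^I`, extending by zero on coordinates in `S`. -/
def extendZero [DecidableEq I] (S : Finset I) : ({i : I // i ∉ S} → ℝ) →ₗ[ℝ] (I → ℝ) where
  toFun x := fun i => if h : i ∈ S then 0 else x ⟨i, h⟩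
  map_add' x y := by funext i; by_cases h : i ∈ S <;> simp [h]
  map_smul' c x := by funext i; by_cases h : i ∈ S <;> simp [h]

/-- The coordinate projection `π : ℝ^I → ℝ^{I∖S}`. -/
def projRes [DecidableEq I] (S : Finset I) : (I → ℝ) →ₗ[ℝ] ({i : I // i ∉ S} → ℝ) :=
  LinearMap.funLeft ℝ ℝ Subtype.val


lemma mem_perp {I : Type*} [Fintype I] {V : Submodule ℝ (I → ℝ)} {x : I → ℝ} :
    x ∈ perp V ↔ ∀ v ∈ V, dot x v = 0 := Iff.rfl

lemma dot_comm' {I : Type*} [Fintype I] (x y : I → ℝ) : dot x y = dot y x := by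
  simp [dot, mul_comm]

lemma dot_sub_left {I : Type*} [Fintype I] (x y v : I → ℝ) :
    dot (x - y) v = dot x v - dot y v := by
  simp [dot, sub_mul, Finset.sum_sub_distrib]

lemma dot_sub_right {I : Type*} [Fintype I] (x a b : I → ℝ) :
    dot x (a - b) = dot x a - dot x b := by
  rw [dot_comm', dot_sub_left, dot_comm' a x, dot_comm' b x]

/-- Transfer to `EuclideanSpace`. -/
noncomputable def euc {I : Type*} [Fintype I] : (I → ℝ) ≃ₗ[ℝ] EuclideanSpace ℝ I :=
  (WithLp.linearEquiv 2 ℝ (I → ℝ)).symm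

lemma euc_apply {I : Type*} [Fintype I] (x : I → ℝ) (i : I) : euc x i = x i := rfl

lemma inner_euc {I : Type*} [Fintype I] (x y : I → ℝ) :
    (inner ℝ (euc x) (euc y) : ℝ) = dot x y := by
  simp [PiLp.inner_apply, RCLike.inner_apply, euc_apply, dot, mul_comm]

lemma perp_map_euc {I : Type*} [Fintype I] (V : Submodule ℝ (I → ℝ)) :
    Submodule.map (euc (I := I)).toLinearMap (perp V)
      = (Submodule.map (euc (I := I)).toLinearMap V)ᗮ := by
  ext y
  constructor
  · rintro ⟨x, hx, rfl⟩
    rintro u ⟨v, hv, rfl⟩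
    rw [real_inner_comm]
    exact (inner_euc x v).trans (hx v hv)
  · intro hy
    refine ⟨euc.symm y, fun v hv => ?_, by simp⟩
    have := hy (euc v) ⟨v, hv, rfl⟩
    rw [real_inner_comm] at this
    rw [← inner_euc]
    simpa using this
lemma perp_inf {I : Type*} [Fintype I] (K L : Submodule ℝ (I → ℝ)) :
    perp (K ⊓ L) = perp K ⊔ perp L := by
  have hinj : Function.Injective (euc (I := I)).toLinearMap := euc.injective
  apply Submodule.map_injective_of_injective hinj
  rw [Submodule.map_sup, perp_map_euc, perp_map_euc, perp_map_euc,
    Submodule.map_inf _ hinj]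
  set K' := Submodule.map (euc (I := I)).toLinearMap K
  set L' := Submodule.map (euc (I := I)).toLinearMap L
  have h1 : K' ⊓ L' = (K'ᗮ ⊔ L'ᗮ)ᗮ := by
    rw [← Submodule.inf_orthogonal, Submodule.orthogonal_orthogonal,
      Submodule.orthogonal_orthogonal]
  rw [h1, Submodule.orthogonal_orthogonal]

lemma dot_proj {I : Type*} [Fintype I] [DecidableEq I] (S : Finset I) (w : I → ℝ)
    (v : {i : I // i ∉ S} → ℝ) :
    dot (projRes S w) v = dot w (extendZero S v) := by
  classical
  unfold dot projRes extendZero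
  simp only [LinearMap.funLeft_apply, LinearMap.coe_mk, AddHom.coe_mk]
  rw [← Finset.sum_subset (Finset.subset_univ Sᶜ)
    (fun i _ hi => by
      rw [dif_pos (by simpa using hi), mul_zero]),
    Finset.sum_subtype (p := fun i => i ∉ S) Sᶜ (fun i => by simp)
      (fun i => w i * if h : i ∈ S then 0 else v ⟨i, h⟩)]
  refine Finset.sum_congr rfl fun j _ => ?_
  rw [dif_neg j.2]

lemma proj_extend {I : Type*} [Fintype I] [DecidableEq I] (S : Finset I)
    (v : {i : I // i ∉ S} → ℝ) : projRes S (extendZero S v) = v := by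
  funext j
  simp only [projRes, LinearMap.funLeft_apply, extendZero, LinearMap.coe_mk, AddHom.coe_mk]
  rw [dif_neg j.2]

/-- **Gale duality exchanges restriction and deletion:** `(𝒱^S)^∨ = (𝒱^∨)_S`.
Suppose `V + ℝ^{I∖S} = ℝ^I`.  Then:
(1) the orthogonal complement inside `ℝ^{I∖S}` of `V^S = V ∩ ℝ^{I∖S}` equals the
coordinate projection `π(V^⊥)`, so the underlying subspaces of `(𝒱^S)^∨` and
`(𝒱^∨)_S` agree;
(2) the `η`-data agree: any lift `ζ` of the covector `ξ^S = ξ|_{V^S}` (i.e. any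
`ζ` with `⟨ζ, v⟩ = ξ(v)` for all `v ∈ V^S`) satisfies
`(-ζ) - (-π(ξ)) ∈ π(V^⊥)`, so `-ζ` and `π(-ξ)` represent the same class modulo the
common subspace;
(3) the `ξ`-data agree: for any lift `z` of `η^S` (i.e. `z` with `i(z + V^S) = η`,
that is, `extendZero z - η ∈ V`) and any `w ∈ V^⊥`, the functional `-η^S` of
`(𝒱^S)^∨` evaluated at `π(w)` equals the functional `ξ^∨ ∘ (π|_{V^⊥})⁻¹` of
`(𝒱^∨)_S` there: `-⟨z, π(w)⟩ = -⟨η, w⟩`. -/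
theorem restriction_deletion_duality [DecidableEq I] (A : PolArr I) (S : Finset I)
    (hS : A.V ⊔ zeroOn (↑S : Set I) = ⊤) :
    perp (Submodule.comap (extendZero S) A.V) =
      Submodule.map (projRes S) (perp A.V) ∧
    (∀ ζ : {i : I // i ∉ S} → ℝ,
      (∀ v : {i : I // i ∉ S} → ℝ, extendZero S v ∈ A.V →
        dot ζ v = dot A.ξ (extendZero S v)) →
      (-ζ) - (-(projRes S A.ξ)) ∈ Submodule.map (projRes S) (perp A.V)) ∧
    (∀ z : {i : I // i ∉ S} → ℝ, extendZero S z - A.η ∈ A.V →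
      ∀ w ∈ perp A.V, -dot z (projRes S w) = -dot A.η w) := by
  classical
  have key : perp (Submodule.comap (extendZero S) A.V) =
      Submodule.map (projRes S) (perp A.V) := by
    ext x
    constructor
    · intro hx
      have hmem : extendZero S x ∈ perp (A.V ⊓ zeroOn (↑S : Set I)) := by
        intro u hu
        have hu1 : u ∈ A.V := hu.1
        have hu2 : ∀ i ∈ S, u i = 0 := fun i hi => hu.2 i hi
        have hEu : extendZero S (projRes S u) = u := by
          funext i
          by_cases h : i ∈ S
          · simp only [extendZero, LinearMap.coe_mk, AddHom.coe_mk, dif_pos h]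
            exact (hu2 i h).symm
          · simp only [extendZero, LinearMap.coe_mk, AddHom.coe_mk, dif_neg h,
              projRes, LinearMap.funLeft_apply]
        have h1 : dot (extendZero S x) u = dot x (projRes S u) := by
          conv_lhs => rw [← hEu]
          rw [← dot_proj, proj_extend]
        rw [h1]
        exact hx (projRes S u) (Submodule.mem_comap.mpr (by rw [hEu]; exact hu1))
      rw [perp_inf] at hmem
      obtain ⟨w, hw, s, hs, hws⟩ := Submodule.mem_sup.mp hmem
      have hs0 : ∀ j : {i : I // i ∉ S}, s j.1 = 0 := by
        intro j
        have hsingle : (Pi.single j.1 1 : I → ℝ) ∈ zeroOn (↑S : Set I) := by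
          intro i hi
          have : i ≠ j.1 := fun h => j.2 (h ▸ hi)
          simp [Pi.single_apply, this]
        have := hs _ hsingle
        simpa [dot, Pi.single_apply] using this
      refine ⟨w, hw, ?_⟩
      funext j
      have : w j.1 + s j.1 = extendZero S x j.1 := congrFun hws j.1
      have hE : extendZero S x j.1 = x j := by
        simp only [extendZero, LinearMap.coe_mk, AddHom.coe_mk, dif_neg j.2]
      simp only [projRes, LinearMap.funLeft_apply]
      rw [← hE, ← this, hs0 j, add_zero]
    · rintro ⟨w, hw, rfl⟩ v hv
      rw [dot_proj]
      exact hw _ (Submodule.mem_comap.mp hv)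
  refine ⟨key, ?_, ?_⟩
  · intro ζ hζ
    have : (-ζ) - (-(projRes S A.ξ)) = projRes S A.ξ - ζ := by ring_nf
    rw [this, ← key]
    intro v hv
    have hv' : extendZero S v ∈ A.V := Submodule.mem_comap.mp hv
    rw [dot_sub_left, dot_proj, hζ v hv', sub_self]
  · intro z hz w hw
    have : dot z (projRes S w) = dot A.η w := by
      rw [dot_comm', dot_proj, dot_comm']
      have h0 : dot w (extendZero S z - A.η) = 0 := hw _ hz
      rw [dot_sub_right] at h0
      rw [dot_comm' w (extendZero S z)] at h0
      rw [dot_comm' A.η w]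
      linarith
    rw [this]
end

section
/- Let 𝒱 be a polarized arrangement and let a, b ∈ 𝔹 be bases. If μ(a) ∈ ℬ_b, i.e. the sign vector μ(a) agrees with μ(b) in every coordinate i ∈ b, then a ≤ b in the partial order on 𝔹. -/
open Finset

variable {I : Type*} [Fintype I]

/-- The generating relation `b₁ ≺ b₂` of the partial order on bases:
`|b₁ ∩ b₂| = dim V - 1` and `ξ(H_{b₁} - H_{b₂}) < 0`. -/
def Prec [DecidableEq I] (V : Submodule ℝ (I → ℝ)) (η ξ : I → ℝ) (b₁ b₂ : Finset I) : Prop :=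
  IsBasisSet V η b₁ ∧ IsBasisSet V η b₂ ∧ (b₁ ∩ b₂).card = Module.finrank ℝ V - 1 ∧
    ∃ p₁ ∈ Flat V η ↑b₁, ∃ p₂ ∈ Flat V η ↑b₂, dot ξ (p₁ - p₂) < 0

/-- The partial order on bases: the reflexive-transitive closure of `≺`. -/
def OrderLE [DecidableEq I] (V : Submodule ℝ (I → ℝ)) (η ξ : I → ℝ) :
    Finset I → Finset I → Prop :=
  Relation.ReflTransGen (Prec V η ξ)

set_option linter.unusedSectionVars false
section Helpers

variable {I : Type*} [Fintype I]

lemma dot_add_right (ξ x y : I → ℝ) : dot ξ (x + y) = dot ξ x + dot ξ y := by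
  simp [dot, mul_add, Finset.sum_add_distrib]

lemma dot_smul_right (ξ : I → ℝ) (c : ℝ) (x : I → ℝ) : dot ξ (c • x) = c * dot ξ x := by
  simp [dot, Finset.mul_sum, mul_comm, mul_left_comm]

lemma dot_sub_right_s6 (ξ x y : I → ℝ) : dot ξ (x - y) = dot ξ x - dot ξ y := by
  simp [dot, mul_sub, Finset.sum_sub_distrib]

lemma dot_sum_right (ξ : I → ℝ) {κ : Type*} (s : Finset κ) (f : κ → I → ℝ) :
    dot ξ (∑ k ∈ s, f k) = ∑ k ∈ s, dot ξ (f k) := by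
  classical
  induction s using Finset.induction with
  | empty => simp [dot]
  | @insert _ _ h ih => rw [Finset.sum_insert h, dot_add_right, ih, Finset.sum_insert h]

lemma ncard_subset_finset [DecidableEq I] {s : Set I} {t : Finset I} (h : s ⊆ ↑t) :
    s.ncard ≤ t.card := by
  have := Set.ncard_le_ncard h t.finite_toSet
  simpa [Set.ncard_coe_finset] using this

end Helpers
section Core
variable {I : Type*} [Fintype I] [DecidableEq I]

/-- Exact support: a point of `V_η` vanishing on a basis `a` is nonzero off `a`. -/
lemma support_exact (A : PolArr I) {a : Finset I} (hcard : a.card = Module.finrank ℝ A.V)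
    {x : I → ℝ} (hx : x - A.η ∈ A.V) (hz : ∀ i ∈ a, x i = 0) {i₀ : I} (hi₀ : i₀ ∉ a) :
    x i₀ ≠ 0 := by
  intro h0
  have hsub : {i | x i ≠ 0} ⊆ ↑(insert i₀ a)ᶜ := by
    intro i hi
    simp only [Finset.coe_compl, Set.mem_compl_iff, Finset.mem_coe, Finset.mem_insert]
    rintro (rfl | hia)
    · exact hi h0
    · exact hi (hz i hia)
  have h1 : Set.ncard {i | x i ≠ 0} ≤ Fintype.card I - (insert i₀ a).card := by
    have h := ncard_subset_finset hsub
    rwa [Finset.card_compl] at h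
  have h2 := A.cond_a x hx
  have h3 : (insert i₀ a).card = a.card + 1 := Finset.card_insert_of_notMem hi₀
  have h4 : (insert i₀ a).card ≤ Fintype.card I := Finset.card_le_univ _
  omega

/-- A vector of `V` vanishing on a basis `a` is zero. -/
lemma flat_zero (A : PolArr I) {a : Finset I} (ha : IsBasisSet A.V A.η a)
    {v : I → ℝ} (hv : v ∈ A.V) (hz : ∀ i ∈ a, v i = 0) : v = 0 := by
  by_contra hne
  obtain ⟨i₀, hi₀⟩ : ∃ i, v i ≠ 0 := by
    by_contra h; push_neg at h; exact hne (funext h)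
  have hi₀a : i₀ ∉ a := fun h => hi₀ (hz i₀ h)
  obtain ⟨p, hp⟩ := ha.2
  set x : I → ℝ := p - (p i₀ / v i₀) • v with hxdef
  have hxV : x - A.η ∈ A.V := by
    have : x - A.η = (p - A.η) - (p i₀ / v i₀) • v := by
      rw [hxdef]; abel
    rw [this]
    exact Submodule.sub_mem _ hp.1 (Submodule.smul_mem _ _ hv)
  have hxz : ∀ i ∈ a, x i = 0 := by
    intro i hi
    simp [hxdef, hp.2 i hi, hz i hi]
  have := support_exact A ha.1 hxV hxz hi₀a
  apply this
  simp only [hxdef, Pi.sub_apply, Pi.smul_apply, smul_eq_mul]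
  field_simp
  ring

/-- Dual basis vectors for a basis `a`: `w k ∈ V`, `(w k)_i = δ_{ik}` on `a`,
and every `v ∈ V` is the corresponding combination. -/
lemma exists_dual (A : PolArr I) {a : Finset I} (ha : IsBasisSet A.V A.η a) :
    ∃ w : ↥a → (I → ℝ), (∀ k, w k ∈ A.V) ∧
      (∀ k, ∀ i ∈ a, w k i = if i = ↑k then 1 else 0) ∧
      (∀ v ∈ A.V, v = ∑ k : ↥a, v ↑k • w k) := by
  classical
  let f : A.V →ₗ[ℝ] (↥a → ℝ) :=
    { toFun := fun v k => v.1 ↑k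
      map_add' := fun x y => rfl
      map_smul' := fun c x => rfl }
  have hinj : Function.Injective f := by
    intro x y hxy
    apply Subtype.ext
    have : (x : I → ℝ) - y ∈ A.V := Submodule.sub_mem _ x.2 y.2
    have hz : ∀ i ∈ a, ((x : I → ℝ) - y) i = 0 := by
      intro i hi
      have := congrFun hxy ⟨i, hi⟩
      simpa [f, sub_eq_zero] using this
    have := flat_zero A ha this hz
    rwa [sub_eq_zero] at this
  have hrank : Module.finrank ℝ A.V = Module.finrank ℝ (↥a → ℝ) := by
    rw [Module.finrank_fintype_fun_eq_card, Fintype.card_coe, ha.1]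
  have hsurj : Function.Surjective f :=
    (LinearMap.injective_iff_surjective_of_finrank_eq_finrank hrank).mp hinj
  choose g hg using hsurj
  refine ⟨fun k => (g (Pi.single k 1) : I → ℝ), fun k => (g _).2, ?_, ?_⟩
  · intro k i hi
    have hcoord : ((g (Pi.single k 1)) : I → ℝ) i = (Pi.single k (1:ℝ) : ↥a → ℝ) ⟨i, hi⟩ := by
      have h := congrFun (hg (Pi.single k 1)) ⟨i, hi⟩
      simpa only [f, LinearMap.coe_mk, AddHom.coe_mk] using h
    show ((g (Pi.single k 1)) : I → ℝ) i = _
    rw [hcoord]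
    by_cases h : i = ↑k
    · have hik : (⟨i, hi⟩ : ↥a) = k := Subtype.ext h
      simp [hik, h, Pi.single_apply]
    · have hik : (⟨i, hi⟩ : ↥a) ≠ k := fun hc => h (congrArg Subtype.val hc)
      simp [Pi.single_apply, hik, h]
  · intro v hv
    set u : I → ℝ := ∑ k : ↥a, v ↑k • (g (Pi.single k 1) : I → ℝ) with hu
    have huV : u ∈ A.V :=
      Submodule.sum_mem _ fun k _ => Submodule.smul_mem _ _ (g _).2
    have hz : ∀ i ∈ a, (v - u) i = 0 := by
      intro i hi
      have hui : u i = v i := by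
        rw [hu]
        rw [show (∑ k : ↥a, v ↑k • (g (Pi.single k 1) : I → ℝ)) i
            = ∑ k : ↥a, v ↑k * (g (Pi.single k 1) : I → ℝ) i from by
          simp [Finset.sum_apply]]
        have : ∀ k : ↥a, v ↑k * (g (Pi.single k 1) : I → ℝ) i
            = if (⟨i, hi⟩ : ↥a) = k then v ↑k else 0 := by
          intro k
          have hcoord : ((g (Pi.single k 1)) : I → ℝ) i = (Pi.single k (1:ℝ) : ↥a → ℝ) ⟨i, hi⟩ := by
            have h := congrFun (hg (Pi.single k 1)) ⟨i, hi⟩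
            simpa only [f, LinearMap.coe_mk, AddHom.coe_mk] using h
          rw [hcoord]
          by_cases h : (⟨i, hi⟩ : ↥a) = k
          · simp [h, Pi.single_apply]
          · simp [Pi.single_apply, h, Ne.symm h]
        rw [Finset.sum_congr rfl fun k _ => this k]
        simp
      simp [Pi.sub_apply, hui]
    have h0 := flat_zero A ha (Submodule.sub_mem _ hv huV) hz
    show v = u
    exact sub_eq_zero.mp h0
end Core
section Core2
variable {I : Type*} [Fintype I] [DecidableEq I]

lemma dot_repr (A : PolArr I) {a : Finset I} (w : ↥a → (I → ℝ))
    (hrepr : ∀ v ∈ A.V, v = ∑ k : ↥a, v ↑k • w k) {v : I → ℝ} (hv : v ∈ A.V) :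
    dot A.ξ v = ∑ k : ↥a, v ↑k * dot A.ξ (w k) := by
  conv_lhs => rw [hrepr v hv]
  rw [dot_sum_right]
  exact Finset.sum_congr rfl fun k _ => dot_smul_right _ _ _

lemma dual_dot_ne_zero (A : PolArr I) {a : Finset I} (ha : IsBasisSet A.V A.η a)
    (w : ↥a → (I → ℝ)) (hwV : ∀ k, w k ∈ A.V)
    (hrepr : ∀ v ∈ A.V, v = ∑ k : ↥a, v ↑k • w k) (k₀ : ↥a) :
    dot A.ξ (w k₀) ≠ 0 := by
  intro hc0
  set ξ' : I → ℝ := fun i => if h : i ∈ a then dot A.ξ (w ⟨i, h⟩) else 0 with hξ'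
  have hξ'coord : ∀ k : ↥a, ξ' ↑k = dot A.ξ (w k) := by
    intro k; simp [hξ', k.2]
  have hperp : ξ' - A.ξ ∈ perp A.V := by
    intro v hv
    have h1 : dot (ξ' - A.ξ) v = dot ξ' v - dot A.ξ v := by
      simp [dot, sub_mul, Finset.sum_sub_distrib]
    have h2 : dot ξ' v = ∑ k : ↥a, v ↑k * dot A.ξ (w k) := by
      rw [dot, ← Finset.sum_subset (Finset.subset_univ a)
        (fun i _ hia => by simp [hξ', hia])]
      rw [← Finset.sum_attach a (fun i => ξ' i * v i), Finset.univ_eq_attach]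
      refine Finset.sum_congr rfl fun k _ => ?_
      rw [hξ'coord k, mul_comm]
    rw [h1, h2, dot_repr A w hrepr hv, sub_self]
  have hsupp : {i | ξ' i ≠ 0} ⊆ ↑(a.erase ↑k₀) := by
    intro i hi
    simp only [Set.mem_setOf_eq] at hi
    by_cases h : i ∈ a
    · have : i ≠ ↑k₀ := by
        intro rfl_eq
        apply hi
        have : (⟨i, h⟩ : ↥a) = k₀ := Subtype.ext rfl_eq
        simp [hξ', h, this, hc0]
      exact Finset.mem_coe.mpr (Finset.mem_erase.mpr ⟨this, h⟩)
    · exact absurd (by simp [hξ', h]) hi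
  have h1 := A.cond_b ξ' hperp
  have h2 := ncard_subset_finset hsupp
  have h3 : (a.erase ↑k₀).card = a.card - 1 := Finset.card_erase_of_mem k₀.2
  have h4 : 1 ≤ a.card := Finset.card_pos.mpr ⟨↑k₀, k₀.2⟩
  rw [ha.1] at h3 h4
  omega
end Core2
section Core3
variable {I : Type*} [Fintype I] [DecidableEq I]

lemma sign_sq {β : I → ℝ} (hβ : IsSign β) (i : I) : β i * β i = 1 := by
  rcases hβ i with h | h <;> rw [h] <;> norm_num

lemma sign_abs {β : I → ℝ} (hβ : IsSign β) (i : I) : |β i| = 1 := by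
  rcases hβ i with h | h <;> rw [h] <;> norm_num

/-- If `μ(b) = β`, then `ξ` is strictly negative on the nonzero part of the simplicial
cone `{v ∈ V : β(i) v_i ≥ 0 for i ∈ b}`. -/
lemma cone_neg (A : PolArr I) {b : Finset I} (hb : IsBasisSet A.V A.η b)
    {β : I → ℝ} (hβs : IsSign β) (hμb : MuSpec A.V A.η A.ξ b β) :
    ∀ v ∈ A.V, (∀ i ∈ b, 0 ≤ β i * v i) → v ≠ 0 → dot A.ξ v < 0 := by
  obtain ⟨p, hpF, hpD, hopt⟩ := hμb.2.2
  obtain ⟨w, hwV, hwcoord, hrepr⟩ := exists_dual A hb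
  -- strict positivity of the off-basis coordinates of p
  have hppos : ∀ i ∉ b, 0 < β i * p i := by
    intro i hi
    have hne := support_exact A hb.1 hpF.1 hpF.2 hi
    have hge := hpD.2 i
    rcases lt_or_eq_of_le hge with h | h
    · exact h
    · exfalso
      apply hne
      rcases hβs i with hs | hs <;> rw [hs] at h <;> linarith
  -- each dual vector has negative ξ-pairing in the β-direction
  have hkey : ∀ j : ↥b, β ↑j * dot A.ξ (w j) < 0 := by
    intro j
    set u : I → ℝ := β ↑j • w j with hu
    have hne : (Finset.univ : Finset I).Nonempty := ⟨↑j, Finset.mem_univ _⟩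
    set f : I → ℝ := fun i => (if i ∈ b then 1 else β i * p i) / (|u i| + 1) with hf
    have hfpos : ∀ i, 0 < f i := by
      intro i
      apply div_pos
      · by_cases h : i ∈ b
        · simp [h]
        · simpa [h] using hppos i h
      · positivity
    set t : ℝ := Finset.univ.inf' hne f with ht
    have htpos : 0 < t := (Finset.lt_inf'_iff hne).mpr fun i _ => hfpos i
    have htle : ∀ i : I, t ≤ f i := fun i => Finset.inf'_le _ (Finset.mem_univ i)
    set q : I → ℝ := p + t • u with hq
    have hqj : q ↑j = t * β ↑j := by
      have h1 : p ↑j = 0 := hpF.2 ↑j j.2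
      have h2 : w j ↑j = 1 := by rw [hwcoord j ↑j j.2]; simp
      simp [hq, hu, h1, h2, mul_comm]
    have hqD : q ∈ Delta A.V A.η β := by
      constructor
      · have : q - A.η = (p - A.η) + t • u := by rw [hq]; abel
        rw [this]
        exact Submodule.add_mem _ hpF.1
          (Submodule.smul_mem _ _ (Submodule.smul_mem _ _ (hwV j)))
      · intro i
        by_cases hib : i ∈ b
        · by_cases hij : i = ↑j
          · rw [hij, hqj]
            nlinarith [sign_sq hβs (↑j : I), htpos]
          · have h1 : p i = 0 := hpF.2 i hib
            have h2 : w j i = 0 := by rw [hwcoord j i hib]; simp [hij]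
            simp [hq, hu, h1, h2]
        · have h1 : β i * q i = β i * p i + t * (β i * u i) := by
            simp [hq]; ring
          rw [h1]
          have h2 : -|u i| ≤ β i * u i := by
            have := abs_le.mp (le_refl |β i * u i|)
            have habs : |β i * u i| = |u i| := by
              rw [abs_mul, sign_abs hβs i, one_mul]
            nlinarith [neg_abs_le (β i * u i), habs]
          have h3 : t * |u i| ≤ β i * p i * |u i| / (|u i| + 1) := by
            have := htle i
            rw [hf] at this
            simp only [hib, if_neg, if_false] at this
            have habs : (0:ℝ) ≤ |u i| := abs_nonneg _
            calc t * |u i| ≤ (β i * p i / (|u i| + 1)) * |u i| := by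
                  apply mul_le_mul_of_nonneg_right _ habs
                  simpa using this
            _ = β i * p i * |u i| / (|u i| + 1) := by ring
          have h4 : β i * p i * |u i| / (|u i| + 1) ≤ β i * p i := by
            rw [div_le_iff₀ (by positivity)]
            nlinarith [hppos i hib, abs_nonneg (u i)]
          nlinarith [mul_le_mul_of_nonneg_left h2 (le_of_lt htpos)]
    have hqne : q ≠ p := by
      intro h
      have h1 : p ↑j = 0 := hpF.2 ↑j j.2
      have := hqj
      rw [h, h1] at this
      rcases hβs ↑j with hs | hs <;> rw [hs] at this <;> nlinarith
    have hlt := hopt q hqD hqne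
    have hsub : q - p = t • u := by rw [hq]; abel
    rw [hsub, dot_smul_right, hu, dot_smul_right] at hlt
    nlinarith
  -- conclude for a general nonzero v in the cone
  intro v hv hvc hvne
  rw [dot_repr A w hrepr hv]
  have hterm : ∀ k : ↥b, v ↑k * dot A.ξ (w k) ≤ 0 := by
    intro k
    have h1 : (β ↑k * v ↑k) * (β ↑k * dot A.ξ (w k)) = v ↑k * dot A.ξ (w k) := by
      have hs := sign_sq hβs (↑k : I)
      calc (β ↑k * v ↑k) * (β ↑k * dot A.ξ (w k))
          = (β ↑k * β ↑k) * (v ↑k * dot A.ξ (w k)) := by ring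
        _ = v ↑k * dot A.ξ (w k) := by rw [hs, one_mul]
    rw [← h1]
    exact mul_nonpos_of_nonneg_of_nonpos (hvc ↑k k.2) (le_of_lt (hkey k))
  have hex : ∃ k : ↥b, v ↑k ≠ 0 := by
    by_contra h
    push_neg at h
    apply hvne
    rw [hrepr v hv]
    simp only [h, zero_smul]
    simp
  obtain ⟨k₀, hk₀⟩ := hex
  have hstrict : v ↑k₀ * dot A.ξ (w k₀) < 0 := by
    have h1 : (β ↑k₀ * v ↑k₀) * (β ↑k₀ * dot A.ξ (w k₀)) = v ↑k₀ * dot A.ξ (w k₀) := by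
      have hs := sign_sq hβs (↑k₀ : I)
      calc (β ↑k₀ * v ↑k₀) * (β ↑k₀ * dot A.ξ (w k₀))
          = (β ↑k₀ * β ↑k₀) * (v ↑k₀ * dot A.ξ (w k₀)) := by ring
        _ = v ↑k₀ * dot A.ξ (w k₀) := by rw [hs, one_mul]
    rw [← h1]
    have hpos : 0 < β ↑k₀ * v ↑k₀ := by
      rcases lt_or_eq_of_le (hvc ↑k₀ k₀.2) with h | h
      · exact h
      · exfalso
        apply hk₀
        rcases hβs ↑k₀ with hs | hs <;> rw [hs] at h <;> linarith
    exact mul_neg_of_pos_of_neg hpos (hkey k₀)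
  calc ∑ k : ↥b, v ↑k * dot A.ξ (w k)
      < ∑ _k : ↥b, (0:ℝ) :=
        Finset.sum_lt_sum (fun k _ => hterm k) ⟨k₀, Finset.mem_univ _, hstrict⟩
    _ = 0 := by simp
end Core3
section Main
variable {I : Type*} [Fintype I] [DecidableEq I]

/-- The simplex-pivot induction: from any basis `a` whose point lies in the simplicial
cone over `b`, there is an increasing chain of pivots to `b`. -/
lemma chain_to_b (A : PolArr I) {b : Finset I} (hb : IsBasisSet A.V A.η b) {β : I → ℝ}
    (hβs : IsSign β)
    (hP : ∀ v ∈ A.V, (∀ i ∈ b, 0 ≤ β i * v i) → v ≠ 0 → dot A.ξ v < 0) :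
    ∀ m : ℕ, ∀ a : Finset I, IsBasisSet A.V A.η a → (a \ b).card = m →
      (∃ p, p ∈ Flat A.V A.η ↑a ∧ ∀ i ∈ b, 0 ≤ β i * p i) →
      OrderLE A.V A.η A.ξ a b := by
  intro m
  induction m with
  | zero =>
    intro a ha hcard _
    have hab : a = b := Finset.eq_of_subset_of_card_le
      (Finset.sdiff_eq_empty_iff_subset.mp (Finset.card_eq_zero.mp hcard))
      (by rw [ha.1, hb.1])
    rw [hab]
    exact Relation.ReflTransGen.refl
  | succ m ih =>
    intro a ha hcard hp
    obtain ⟨p, hpF, hpinv⟩ := hp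
    have hne : (a \ b).Nonempty := Finset.card_pos.mp (by omega)
    obtain ⟨k, hk⟩ := hne
    have hka : k ∈ a := (Finset.mem_sdiff.mp hk).1
    have hkb : k ∉ b := (Finset.mem_sdiff.mp hk).2
    obtain ⟨w, hwV, hwcoord, hrepr⟩ := exists_dual A ha
    set c : ℝ := dot A.ξ (w ⟨k, hka⟩) with hc
    have hcne : c ≠ 0 := dual_dot_ne_zero A ha w hwV hrepr ⟨k, hka⟩
    set ε : ℝ := if 0 < c then 1 else -1 with hε
    set w' : I → ℝ := ε • w ⟨k, hka⟩ with hw'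
    have hw'V : w' ∈ A.V := Submodule.smul_mem _ _ (hwV _)
    have hξw' : 0 < dot A.ξ w' := by
      rw [hw', dot_smul_right, ← hc, hε]
      rcases lt_trichotomy 0 c with h | h | h
      · simp [h]
      · exact absurd h.symm hcne
      · simp [not_lt.mpr (le_of_lt h)]; linarith
    have hw'a : ∀ i ∈ a, i ≠ k → w' i = 0 := by
      intro i hia hik
      rw [hw']
      have := hwcoord ⟨k, hka⟩ i hia
      simp only [Pi.smul_apply, smul_eq_mul]
      rw [this]
      simp [hik]
    have hw'k : w' k = ε := by
      rw [hw']
      have := hwcoord ⟨k, hka⟩ k hka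
      simp only [Pi.smul_apply, smul_eq_mul]
      rw [this]
      simp
    have hw'ne : w' ≠ 0 := by
      intro h
      have := congrFun h k
      rw [hw'k] at this
      rw [hε] at this
      split at this <;> norm_num at this
    -- the set of blocking constraints
    set J : Finset I := (b \ a).filter (fun j => β j * w' j < 0) with hJ
    have hJne : J.Nonempty := by
      by_contra hJe
      rw [Finset.not_nonempty_iff_eq_empty] at hJe
      have hcone : ∀ i ∈ b, 0 ≤ β i * w' i := by
        intro i hib
        by_cases hia : i ∈ a
        · have hik : i ≠ k := fun h => hkb (h ▸ hib)
          rw [hw'a i hia hik, mul_zero]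
        · by_contra hneg
          push_neg at hneg
          have : i ∈ J := Finset.mem_filter.mpr ⟨Finset.mem_sdiff.mpr ⟨hib, hia⟩, hneg⟩
          rw [hJe] at this
          exact absurd this (Finset.notMem_empty i)
      have := hP w' hw'V hcone hw'ne
      linarith
    set tfun : I → ℝ := fun j => (β j * p j) / (-(β j * w' j)) with htfun
    obtain ⟨j₀, hj₀J, hj₀min⟩ := Finset.exists_min_image J tfun hJne
    have hJfacts : ∀ j ∈ J, j ∈ b ∧ j ∉ a ∧ β j * w' j < 0 ∧ 0 < β j * p j := by
      intro j hj
      have h1 := Finset.mem_filter.mp hj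
      have h2 := Finset.mem_sdiff.mp h1.1
      refine ⟨h2.1, h2.2, h1.2, ?_⟩
      have hpne : p j ≠ 0 := support_exact A ha.1 hpF.1 hpF.2 h2.2
      rcases lt_or_eq_of_le (hpinv j h2.1) with h | h
      · exact h
      · exfalso
        apply hpne
        rcases hβs j with hs | hs <;> rw [hs] at h <;> linarith
    have htfpos : ∀ j ∈ J, 0 < tfun j := by
      intro j hj
      obtain ⟨_, _, h3, h4⟩ := hJfacts j hj
      exact div_pos h4 (by linarith)
    set t : ℝ := tfun j₀ with htdef
    have htpos : 0 < t := htfpos j₀ hj₀J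
    obtain ⟨hj₀b, hj₀a, hj₀w, hj₀p⟩ := hJfacts j₀ hj₀J
    set p' : I → ℝ := p + t • w' with hp'
    have hp'V : p' - A.η ∈ A.V := by
      have : p' - A.η = (p - A.η) + t • w' := by rw [hp']; abel
      rw [this]
      exact Submodule.add_mem _ hpF.1 (Submodule.smul_mem _ _ hw'V)
    have hp'coord : ∀ i, p' i = p i + t * w' i := by
      intro i; simp [hp']
    have hp'az : ∀ i ∈ a, i ≠ k → p' i = 0 := by
      intro i hia hik
      rw [hp'coord, hpF.2 i hia, hw'a i hia hik, mul_zero, add_zero]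
    have hj₀k : j₀ ≠ k := fun h => hj₀a (h ▸ hka)
    have hp'j₀ : p' j₀ = 0 := by
      rw [hp'coord]
      have hWne : -(β j₀ * w' j₀) ≠ 0 := by linarith
      have : t * w' j₀ = -(p j₀) := by
        rw [htdef, htfun]
        rw [div_mul_eq_mul_div, div_eq_iff hWne]
        ring
      rw [this]; ring
    set a' : Finset I := insert j₀ (a.erase k) with ha'def
    have hj₀er : j₀ ∉ a.erase k := fun h => hj₀a (Finset.mem_of_mem_erase h)
    have ha'card : a'.card = a.card := by
      rw [ha'def, Finset.card_insert_of_notMem hj₀er, Finset.card_erase_of_mem hka]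
      have : 1 ≤ a.card := Finset.card_pos.mpr ⟨k, hka⟩
      omega
    have hp'F : p' ∈ Flat A.V A.η ↑a' := by
      refine ⟨hp'V, ?_⟩
      intro i hi
      rw [ha'def] at hi
      simp only [Finset.coe_insert, Set.mem_insert_iff, Finset.coe_erase,
        Set.mem_diff, Finset.mem_coe, Set.mem_singleton_iff] at hi
      rcases hi with rfl | ⟨hia, hik⟩
      · exact hp'j₀
      · exact hp'az i hia hik
    have ha' : IsBasisSet A.V A.η a' := ⟨ha'card.trans ha.1, ⟨p', hp'F⟩⟩
    have hinv' : ∀ i ∈ b, 0 ≤ β i * p' i := by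
      intro i hib
      rw [hp'coord]
      by_cases hsgn : 0 ≤ β i * w' i
      · have h1 := hpinv i hib
        nlinarith
      · push_neg at hsgn
        have hia : i ∉ a := by
          intro hia
          have hik : i ≠ k := fun h => hkb (h ▸ hib)
          rw [hw'a i hia hik, mul_zero] at hsgn
          linarith
        have hiJ : i ∈ J := Finset.mem_filter.mpr ⟨Finset.mem_sdiff.mpr ⟨hib, hia⟩, hsgn⟩
        have hle : t ≤ tfun i := hj₀min i hiJ
        have hWne : -(β i * w' i) ≠ 0 := by linarith
        have heq : tfun i * (β i * w' i) = -(β i * p i) := by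
          rw [htfun]
          rw [div_mul_eq_mul_div, div_eq_iff hWne]
          ring
        have h2 : tfun i * (β i * w' i) ≤ t * (β i * w' i) := by
          nlinarith
        have h3 : β i * (p i + t * w' i) = β i * p i + t * (β i * w' i) := by ring
        rw [h3]
        nlinarith
    have hinter : a ∩ a' = a.erase k := by
      ext i
      simp only [Finset.mem_inter, ha'def, Finset.mem_insert, Finset.mem_erase]
      constructor
      · rintro ⟨hia, rfl | ⟨hik, _⟩⟩
        · exact absurd hia hj₀a
        · exact ⟨hik, hia⟩
      · rintro ⟨hik, hia⟩
        exact ⟨hia, Or.inr ⟨hik, hia⟩⟩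
    have hprec : Prec A.V A.η A.ξ a a' := by
      refine ⟨ha, ha', ?_, p, hpF, p', hp'F, ?_⟩
      · rw [hinter, Finset.card_erase_of_mem hka, ha.1]
      · have : p - p' = -(t • w') := by rw [hp']; abel
        rw [this, show -(t • w') = (-t) • w' from by simp [neg_smul], dot_smul_right]
        nlinarith
    have hsd : a' \ b = (a \ b).erase k := by
      ext i
      simp only [ha'def, Finset.mem_sdiff, Finset.mem_insert, Finset.mem_erase]
      constructor
      · rintro ⟨rfl | ⟨hik, hia⟩, hib⟩
        · exact absurd hj₀b hib
        · exact ⟨hik, hia, hib⟩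
      · rintro ⟨hik, hia, hib⟩
        exact ⟨Or.inr ⟨hik, hia⟩, hib⟩
    have hcard' : (a' \ b).card = m := by
      rw [hsd, Finset.card_erase_of_mem hk, hcard]
      omega
    exact Relation.ReflTransGen.head hprec (ih a' ha' hcard' ⟨p', hp'F, hinv'⟩)
end Main
/-- If `μ(a) ∈ ℬ_b`, i.e. the sign vector `μ(a)` agrees with `μ(b)` in every coordinate
`i ∈ b`, then `a ≤ b` in the partial order on bases. -/
theorem order_from_cone [DecidableEq I] (A : PolArr I) (a b : Finset I)
    (ha : IsBasisSet A.V A.η a) (hb : IsBasisSet A.V A.η b)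
    (α β : I → ℝ) (hαs : IsSign α) (hβs : IsSign β)
    (hμa : MuSpec A.V A.η A.ξ a α) (hμb : MuSpec A.V A.η A.ξ b β)
    (hagree : ∀ i ∈ b, α i = β i) :
    OrderLE A.V A.η A.ξ a b := by

  obtain ⟨p, hpF, hpD, _⟩ := hμa.2.2
  exact chain_to_b A hb hβs (cone_neg A hb hβs hμb) (a \ b).card a ha rfl
    ⟨p, hpF, fun i hi => by rw [← hagree i hi]; exact hpD.2 i⟩
end
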